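/- Let f ∈ ℰ'(ℝ^d) be a compactly supported distribution and φ ∈ 𝒮(ℝ^d). Then there exist N₀ ≥ 0 and, for every N ≥ 0, constants C_N such that the short-time Fourier transform satisfies |V_φ f(x,ξ)| ≤ C_N ⟨x⟩^{-N} ⟨ξ⟩^{N₀} for all (x,ξ) ∈ ℝ^{2d}. -/

import Mathlib

/-!
A distribution `f` supported in a compact set `K` has finite order: by continuity it is bounded
by finitely many Schwartz seminorms, and multiplying a test function `ψ` by a bump `χ` equal to
`1` near `K` does not change `f ψ` but makes it vanish outside a fixed ball, so `|f ψ|` is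
controlled by the derivatives of `ψ` of order `≤ n` on that ball. The short-time Fourier
transform is `f` applied to `y ↦ e^{-i⟨y, ξ⟩} conj φ (y - x)`. On the ball, the derivatives of
order `≤ n` of the plane wave are `O(⟨ξ⟩ⁿ)`, and those of the translated window are
`O(⟨x⟩^{-M})` for every `M` by the Schwartz decay of `φ` and Peetre's inequality
`1 + |x| ≤ (1 + |y|) (1 + |y - x|)`.
-/

open scoped RealInnerProductSpace
open Real

/-- The Japanese bracket. -/
noncomputable def jb {d : ℕ} (x : EuclideanSpace ℝ (Fin d)) : ℝ :=
  (1 + ‖x‖ ^ 2) ^ ((1 : ℝ) / 2)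

open scoped ContDiff SchwartzMap Topology
open SchwartzMap

section JapaneseBracket

variable {d : ℕ} (x : EuclideanSpace ℝ (Fin d))

theorem jb_eq_sqrt : jb x = √(1 + ‖x‖ ^ 2) := by
  rw [jb, Real.sqrt_eq_rpow]

theorem one_le_jb : 1 ≤ jb x := by
  rw [jb_eq_sqrt, Real.one_le_sqrt]
  nlinarith [sq_nonneg ‖x‖]

theorem jb_pos : 0 < jb x := zero_lt_one.trans_le (one_le_jb x)

theorem norm_le_jb : ‖x‖ ≤ jb x := by
  rw [jb_eq_sqrt]
  exact Real.le_sqrt_of_sq_le (by linarith)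

theorem jb_le_one_add_norm : jb x ≤ 1 + ‖x‖ := by
  rw [jb_eq_sqrt, Real.sqrt_le_left (by positivity)]
  nlinarith [norm_nonneg x]

theorem one_add_norm_le_two_mul_jb : 1 + ‖x‖ ≤ 2 * jb x := by
  linarith [one_le_jb x, norm_le_jb x]

theorem inv_one_add_norm_pow_le_jb_rpow_neg {N : ℝ} (hN : 0 ≤ N) :
    ((1 + ‖x‖) ^ ⌈N⌉₊)⁻¹ ≤ jb x ^ (-N) := by
  rw [Real.rpow_neg (jb_pos x).le, ← Real.rpow_natCast]
  refine inv_anti₀ (Real.rpow_pos_of_pos (jb_pos x) N) ?_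
  calc jb x ^ N ≤ (1 + ‖x‖) ^ N := Real.rpow_le_rpow (jb_pos x).le (jb_le_one_add_norm x) hN
    _ ≤ (1 + ‖x‖) ^ (⌈N⌉₊ : ℝ) :=
        Real.rpow_le_rpow_of_exponent_le (by linarith [norm_nonneg x]) (Nat.le_ceil N)

theorem le_mul_jb_rpow_of_one_add_norm_pow_mul_le {ξ : EuclideanSpace ℝ (Fin d)} {a C N : ℝ}
    {n : ℕ} (hC : 0 ≤ C) (hN : 0 ≤ N) (h : (1 + ‖x‖) ^ ⌈N⌉₊ * a ≤ C * (1 + ‖ξ‖) ^ n) :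
    a ≤ 2 ^ n * C * jb x ^ (-N) * jb ξ ^ (n : ℝ) := by
  rw [← le_div_iff₀' (by positivity), div_eq_mul_inv] at h
  have hξ : 0 ≤ (2 * jb ξ) ^ n := pow_nonneg (by linarith [jb_pos ξ]) n
  calc a ≤ C * (1 + ‖ξ‖) ^ n * ((1 + ‖x‖) ^ ⌈N⌉₊)⁻¹ := h
    _ ≤ C * (2 * jb ξ) ^ n * jb x ^ (-N) := by
        gcongr
        · exact one_add_norm_le_two_mul_jb ξ
        · exact inv_one_add_norm_pow_le_jb_rpow_neg x hN
    _ = 2 ^ n * C * jb x ^ (-N) * jb ξ ^ (n : ℝ) := by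
        rw [Real.rpow_natCast]
        ring

end JapaneseBracket

theorem norm_iteratedFDeriv_smul_le_of_forall_le {𝕜 𝕜' E F : Type*} [NontriviallyNormedField 𝕜]
    [NormedField 𝕜'] [NormedAlgebra 𝕜 𝕜'] [NormedAddCommGroup E] [NormedSpace 𝕜 E]
    [NormedAddCommGroup F] [NormedSpace 𝕜 F] [NormedSpace 𝕜' F] [IsScalarTower 𝕜 𝕜' F]
    {f : E → 𝕜'} {g : E → F} (hf : ContDiff 𝕜 ∞ f) (hg : ContDiff 𝕜 ∞ g) {x : E} {n : ℕ}
    {A B : ℝ} (hA : ∀ i ≤ n, ‖iteratedFDeriv 𝕜 i f x‖ ≤ A)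
    (hB : ∀ i ≤ n, ‖iteratedFDeriv 𝕜 i g x‖ ≤ B) :
    ‖iteratedFDeriv 𝕜 n (fun y ↦ f y • g y) x‖ ≤ 2 ^ n * (A * B) := by
  have hA0 : 0 ≤ A := (norm_nonneg _).trans (hA 0 n.zero_le)
  calc ‖iteratedFDeriv 𝕜 n (fun y ↦ f y • g y) x‖
      ≤ ∑ i ∈ Finset.range (n + 1), (n.choose i : ℝ) *
          ‖iteratedFDeriv 𝕜 i f x‖ * ‖iteratedFDeriv 𝕜 (n - i) g x‖ :=
        norm_iteratedFDeriv_smul_le hf hg x (mod_cast le_top)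
    _ ≤ ∑ i ∈ Finset.range (n + 1), (n.choose i : ℝ) * A * B := by
        gcongr with i hi
        · exact hA i (Finset.mem_range_succ_iff.mp hi)
        · exact hB _ (Nat.sub_le n i)
    _ = 2 ^ n * (A * B) := by
        rw [← Finset.sum_mul, ← Finset.sum_mul, ← Nat.cast_sum, Nat.sum_range_choose]
        push_cast; ring

section FiniteOrder

variable {E F G : Type*} [NormedAddCommGroup E] [NormedSpace ℝ E]
  [NormedAddCommGroup F] [NormedSpace ℝ F] [NormedAddCommGroup G] [NormedSpace ℝ G]

theorem SchwartzMap.exists_norm_map_le_sup_seminorm (f : 𝓢(E, F) →L[ℝ] G) :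
    ∃ (m : ℕ × ℕ) (C : ℝ), 0 ≤ C ∧
      ∀ ψ, ‖f ψ‖ ≤ C * (Finset.Iic m).sup (schwartzSeminormFamily ℝ E F) ψ := by
  obtain ⟨s, C, -, hC⟩ := Seminorm.bound_of_continuous (schwartz_withSeminorms ℝ E F)
    ((normSeminorm ℝ G).comp f.toLinearMap) (by exact f.continuous.norm)
  refine ⟨s.sup id, C, C.coe_nonneg, fun ψ ↦ (hC ψ).trans ?_⟩
  have hs : s ≤ Finset.Iic (s.sup id) := fun i hi ↦ Finset.mem_Iic.2 (Finset.le_sup (f := id) hi)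
  exact mul_le_mul_of_nonneg_left (Seminorm.le_def.1 (Finset.sup_mono hs) ψ) C.coe_nonneg

theorem SchwartzMap.sup_seminorm_le_of_tsupport_subset_closedBall {ψ : 𝓢(E, F)} {R B : ℝ}
    (hR : 0 ≤ R) (hB : 0 ≤ B) (hψ : tsupport ψ ⊆ Metric.closedBall 0 R) (m : ℕ × ℕ)
    (hbound : ∀ i ≤ m.2, ∀ y : E, ‖y‖ ≤ R → ‖iteratedFDeriv ℝ i ψ y‖ ≤ B) :
    (Finset.Iic m).sup (schwartzSeminormFamily ℝ E F) ψ ≤ (1 + R) ^ m.1 * B := by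
  refine Seminorm.finset_sup_apply_le (by positivity) fun kn hkn ↦ ?_
  obtain ⟨hk, hn⟩ := Finset.mem_Iic.1 hkn
  refine seminorm_le_bound ℝ kn.1 kn.2 ψ (by positivity) fun y ↦ ?_
  by_cases hy : ‖y‖ ≤ R
  · have hpow : ‖y‖ ^ kn.1 ≤ (1 + R) ^ m.1 :=
      (pow_le_pow_left₀ (norm_nonneg y) (by linarith) _).trans
        (pow_le_pow_right₀ (by linarith) hk)
    exact mul_le_mul hpow (hbound _ hn y hy) (norm_nonneg _) (by positivity)
  · have hy' : y ∉ tsupport (iteratedFDeriv ℝ kn.2 ψ) := fun h ↦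
      hy (mem_closedBall_zero_iff.1 (hψ (tsupport_iteratedFDeriv_subset _ h)))
    rw [image_eq_zero_of_notMem_tsupport hy', norm_zero, mul_zero]
    positivity

theorem SchwartzMap.map_smulLeftCLM_eq_of_eventuallyEq_one (f : 𝓢(E, F) →L[ℝ] G) {K : Set E}
    (hsupp : ∀ ψ : 𝓢(E, F), Disjoint (tsupport ψ) K → f ψ = 0) {χ : E → ℝ}
    (hχ : χ.HasTemperateGrowth) (hχK : χ =ᶠ[𝓝ˢ K] 1) (ψ : 𝓢(E, F)) :
    f (smulLeftCLM F χ ψ) = f ψ := by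
  refine (sub_eq_zero.1 ?_).symm
  rw [← map_sub]
  refine hsupp _ (Set.disjoint_right.2 fun y hy ↦ notMem_tsupport_iff_eventuallyEq.2 ?_)
  filter_upwards [(eventually_nhdsSet_iff_forall.1 hχK) y hy] with z hz
  simp [smulLeftCLM_apply_apply hχ, hz]

variable [FiniteDimensional ℝ E]

theorem SchwartzMap.exists_norm_map_le_of_vanishing_off_isCompact (f : 𝓢(E, F) →L[ℝ] G) {K : Set E}
    (hK : IsCompact K) (hsupp : ∀ ψ : 𝓢(E, F), Disjoint (tsupport ψ) K → f ψ = 0) :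
    ∃ (n : ℕ) (R C : ℝ), 0 ≤ C ∧ ∀ (ψ : 𝓢(E, F)) (B : ℝ),
      (∀ i ≤ n, ∀ y : E, ‖y‖ ≤ R → ‖iteratedFDeriv ℝ i ψ y‖ ≤ B) → ‖f ψ‖ ≤ C * B := by
  obtain ⟨m, C₀, hC₀, hf⟩ := exists_norm_map_le_sup_seminorm f
  obtain ⟨r, hr, hKr⟩ : ∃ r : ℝ, 0 ≤ r ∧ K ⊆ Metric.closedBall 0 r := by
    obtain ⟨r, hr⟩ := hK.isBounded.subset_closedBall 0
    exact ⟨max r 0, le_max_right _ _,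
      hr.trans (Metric.closedBall_subset_closedBall (le_max_left _ _))⟩
  let χ : ContDiffBump (0 : E) := ⟨r + 1, r + 2, by linarith, by linarith⟩
  have hχ : (χ : E → ℝ).HasTemperateGrowth := χ.hasCompactSupport.hasTemperateGrowth χ.contDiff
  have hχK : (χ : E → ℝ) =ᶠ[𝓝ˢ K] 1 := eventually_nhdsSet_iff_forall.2 fun y hy ↦
    χ.eventuallyEq_one_of_mem_ball
      (Metric.closedBall_subset_ball (by linarith : r < r + 1) (hKr hy))
  obtain ⟨k, A, hA0, hA⟩ := hχ.norm_iteratedFDeriv_le_uniform m.2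
  have hR : 0 ≤ r + 2 := by linarith
  set R := r + 2
  refine ⟨m.2, R, C₀ * ((1 + R) ^ m.1 * (2 ^ m.2 * (A * (1 + R) ^ k))), by positivity,
    fun ψ B hB ↦ ?_⟩
  have hB0 : 0 ≤ B := (norm_nonneg _).trans (hB 0 m.2.zero_le 0 (norm_zero.trans_le hR))
  have hχψ : ∀ i ≤ m.2, ∀ y : E, ‖y‖ ≤ R →
      ‖iteratedFDeriv ℝ i (smulLeftCLM F χ ψ) y‖ ≤ 2 ^ m.2 * (A * (1 + R) ^ k * B) := by
    intro i hi y hy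
    rw [smulLeftCLM_apply hχ]
    refine (norm_iteratedFDeriv_smul_le_of_forall_le (A := A * (1 + R) ^ k) χ.contDiff ψ.smooth'
      (fun j hj ↦ (hA j (hj.trans hi) y).trans ?_) (fun j hj ↦ hB j (hj.trans hi) y hy)).trans ?_
    · gcongr
    · gcongr
      exact one_le_two
  have hsupp_χψ : tsupport (smulLeftCLM F χ ψ) ⊆ Metric.closedBall 0 R :=
    (tsupport_smulLeftCLM_subset _ ψ).trans (Set.inter_subset_right.trans χ.tsupport_eq.subset)
  rw [← map_smulLeftCLM_eq_of_eventuallyEq_one f hsupp hχ hχK ψ]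
  calc ‖f (smulLeftCLM F χ ψ)‖
      ≤ C₀ * (Finset.Iic m).sup (schwartzSeminormFamily ℝ E F) (smulLeftCLM F χ ψ) := hf _
    _ ≤ C₀ * ((1 + R) ^ m.1 * (2 ^ m.2 * (A * (1 + R) ^ k * B))) := by
        gcongr
        exact sup_seminorm_le_of_tsupport_subset_closedBall hR (by positivity) hsupp_χψ m hχψ
    _ = _ := by ring

end FiniteOrder

theorem one_add_norm_le_mul_one_add_norm_sub {E : Type*} [SeminormedAddCommGroup E] (x y : E) :
    1 + ‖x‖ ≤ (1 + ‖y‖) * (1 + ‖y - x‖) := by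
  have h : ‖x‖ ≤ ‖y‖ + ‖y - x‖ := by simpa using norm_sub_le y (y - x)
  nlinarith [norm_nonneg y, norm_nonneg (y - x)]

theorem SchwartzMap.one_add_norm_pow_mul_norm_iteratedFDeriv_comp_sub_le {E F : Type*}
    [NormedAddCommGroup E] [NormedSpace ℝ E] [NormedAddCommGroup F] [NormedSpace ℝ F]
    (g : 𝓢(E, F)) {M n i : ℕ} (hi : i ≤ n) (x y : E) :
    (1 + ‖x‖) ^ M * ‖iteratedFDeriv ℝ i (fun z ↦ g (z - x)) y‖ ≤
      (1 + ‖y‖) ^ M * (2 ^ M * (Finset.Iic (M, n)).sup (schwartzSeminormFamily ℝ E F) g) := by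
  rw [iteratedFDeriv_comp_sub]
  calc (1 + ‖x‖) ^ M * ‖iteratedFDeriv ℝ i g (y - x)‖
      ≤ (1 + ‖y‖) ^ M * ((1 + ‖y - x‖) ^ M * ‖iteratedFDeriv ℝ i g (y - x)‖) := by
        rw [← mul_assoc, ← mul_pow]
        gcongr
        exact one_add_norm_le_mul_one_add_norm_sub x y
    _ ≤ _ := mul_le_mul_of_nonneg_left
        (one_add_le_sup_seminorm_apply (𝕜 := ℝ) (m := (M, n)) le_rfl hi g (y - x)) (by positivity)

theorem contDiff_cexp_neg_I_mul : ContDiff ℝ ∞ fun t : ℝ ↦ Complex.exp (-Complex.I * t) :=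
  ((Complex.contDiff_exp (𝕜 := ℂ)).restrict_scalars ℝ).comp
    (contDiff_const.mul Complex.ofRealCLM.contDiff)

theorem iteratedDeriv_cexp_neg_I_mul (n : ℕ) :
    iteratedDeriv n (fun t : ℝ ↦ Complex.exp (-Complex.I * t)) =
      fun t : ℝ ↦ (-Complex.I) ^ n * Complex.exp (-Complex.I * t) := by
  induction n with
  | zero => simp
  | succ n ih =>
    ext t
    have h : HasDerivAt (fun t : ℝ ↦ Complex.exp (-Complex.I * t))
        (-Complex.I * Complex.exp (-Complex.I * t)) t := by
      have := (((hasDerivAt_id (t : ℂ)).const_mul (-Complex.I)).cexp).comp_ofReal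
      simpa [mul_comm] using this
    rw [iteratedDeriv_succ, ih, (h.const_mul _).deriv]
    ring

section PlaneWave

variable {E : Type*} [NormedAddCommGroup E] [InnerProductSpace ℝ E]

noncomputable def planeWave (ξ : E) (y : E) : ℂ := Complex.exp (-Complex.I * (⟪y, ξ⟫ : ℝ))

theorem planeWave_eq_comp (ξ : E) :
    planeWave ξ = (fun t : ℝ ↦ Complex.exp (-Complex.I * t)) ∘ innerSL ℝ ξ := by
  ext y
  simp [planeWave, real_inner_comm]

theorem contDiff_planeWave (ξ : E) : ContDiff ℝ ∞ (planeWave ξ) := by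
  rw [planeWave_eq_comp]
  exact contDiff_cexp_neg_I_mul.comp (innerSL ℝ ξ).contDiff

theorem norm_iteratedFDeriv_planeWave_le (ξ : E) (n : ℕ) (y : E) :
    ‖iteratedFDeriv ℝ n (planeWave ξ) y‖ ≤ ‖ξ‖ ^ n := by
  rw [planeWave_eq_comp,
    (innerSL ℝ ξ).iteratedFDeriv_comp_right contDiff_cexp_neg_I_mul y (mod_cast le_top)]
  refine (ContinuousMultilinearMap.norm_compContinuousLinearMap_le _ _).trans ?_
  rw [norm_iteratedFDeriv_eq_norm_iteratedDeriv, iteratedDeriv_cexp_neg_I_mul]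
  simp [Complex.norm_exp, innerSL_apply_norm]

theorem hasTemperateGrowth_planeWave (ξ : E) : (planeWave ξ).HasTemperateGrowth :=
  ⟨contDiff_planeWave ξ, fun n ↦ ⟨0, ‖ξ‖ ^ n, fun y ↦ by
    simpa using norm_iteratedFDeriv_planeWave_le ξ n y⟩⟩

end PlaneWave

section ShortTimeFourierTransform

variable {E : Type*} [NormedAddCommGroup E] [InnerProductSpace ℝ E]

/-- With `g = conj φ`, `(2π)^{-d/2} f (timeFreqShift g x ξ)` is `V_φ f (x, ξ)`. -/
noncomputable def timeFreqShift (g : 𝓢(E, ℂ)) (x ξ : E) : 𝓢(E, ℂ) :=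
  smulLeftCLM ℂ (planeWave ξ) (compSubConstCLM ℂ x g)

theorem timeFreqShift_apply (g : 𝓢(E, ℂ)) (x ξ y : E) :
    timeFreqShift g x ξ y = planeWave ξ y * g (y - x) := by
  simp [timeFreqShift, smulLeftCLM_apply_apply (hasTemperateGrowth_planeWave ξ)]

theorem one_add_norm_pow_mul_norm_iteratedFDeriv_timeFreqShift_le (g : 𝓢(E, ℂ))
    {M n i : ℕ} (hi : i ≤ n) (x ξ y : E) :
    (1 + ‖x‖) ^ M * ‖iteratedFDeriv ℝ i (timeFreqShift g x ξ) y‖ ≤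
      2 ^ n * (1 + ‖ξ‖) ^ n * (1 + ‖y‖) ^ M *
        (2 ^ M * (Finset.Iic (M, n)).sup (schwartzSeminormFamily ℝ E ℂ) g) := by
  set S := 2 ^ M * (Finset.Iic (M, n)).sup (schwartzSeminormFamily ℝ E ℂ) g
  have hx : 0 < (1 + ‖x‖) ^ M := by positivity
  have hwave : ∀ j ≤ i, ‖iteratedFDeriv ℝ j (planeWave ξ) y‖ ≤ (1 + ‖ξ‖) ^ n := fun j hj ↦
    (norm_iteratedFDeriv_planeWave_le ξ j y).trans <|
      (pow_le_pow_left₀ (norm_nonneg ξ) (by linarith) j).trans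
        (pow_le_pow_right₀ (by linarith [norm_nonneg ξ]) (hj.trans hi))
  have htrans : ∀ j ≤ i, ‖iteratedFDeriv ℝ j (fun z ↦ g (z - x)) y‖ ≤
      (1 + ‖y‖) ^ M * S / (1 + ‖x‖) ^ M := fun j hj ↦ by
    rw [le_div_iff₀' hx]
    exact g.one_add_norm_pow_mul_norm_iteratedFDeriv_comp_sub_le (hj.trans hi) x y
  have hfun : ⇑(timeFreqShift g x ξ) = fun z ↦ planeWave ξ z • g (z - x) :=
    funext (timeFreqShift_apply g x ξ)
  rw [hfun, ← le_div_iff₀' hx]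
  calc ‖iteratedFDeriv ℝ i (fun z ↦ planeWave ξ z • g (z - x)) y‖
      ≤ 2 ^ i * ((1 + ‖ξ‖) ^ n * ((1 + ‖y‖) ^ M * S / (1 + ‖x‖) ^ M)) :=
        norm_iteratedFDeriv_smul_le_of_forall_le (contDiff_planeWave ξ)
          (g.smooth'.comp (contDiff_id.sub contDiff_const)) hwave htrans
    _ ≤ 2 ^ n * ((1 + ‖ξ‖) ^ n * ((1 + ‖y‖) ^ M * S / (1 + ‖x‖) ^ M)) := by
        gcongr
        exact one_le_two
    _ = _ := by ring

variable [FiniteDimensional ℝ E]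

theorem exists_one_add_norm_pow_mul_norm_map_timeFreqShift_le (f : 𝓢(E, ℂ) →L[ℝ] ℂ)
    {K : Set E} (hK : IsCompact K) (hsupp : ∀ ψ : 𝓢(E, ℂ), Disjoint (tsupport ψ) K → f ψ = 0)
    (g : 𝓢(E, ℂ)) :
    ∃ n : ℕ, ∀ M : ℕ, ∃ C : ℝ, 0 ≤ C ∧ ∀ x ξ : E,
      (1 + ‖x‖) ^ M * ‖f (timeFreqShift g x ξ)‖ ≤ C * (1 + ‖ξ‖) ^ n := by
  obtain ⟨n, R, C, hC, hf⟩ := exists_norm_map_le_of_vanishing_off_isCompact f hK hsupp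
  refine ⟨n, fun M ↦ ?_⟩
  set S := 2 ^ M * (Finset.Iic (M, n)).sup (schwartzSeminormFamily ℝ E ℂ) g
  refine ⟨C * 2 ^ n * (1 + |R|) ^ M * S, by positivity, fun x ξ ↦ ?_⟩
  have hx : 0 < (1 + ‖x‖) ^ M := by positivity
  rw [← le_div_iff₀' hx]
  calc ‖f (timeFreqShift g x ξ)‖
      ≤ C * (2 ^ n * (1 + ‖ξ‖) ^ n * (1 + |R|) ^ M * S / (1 + ‖x‖) ^ M) := by
        refine hf _ _ fun i hi y hy ↦ ?_
        rw [le_div_iff₀' hx]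
        refine (one_add_norm_pow_mul_norm_iteratedFDeriv_timeFreqShift_le g hi x ξ y).trans ?_
        gcongr
        exact hy.trans (le_abs_self R)
    _ = _ := by ring

end ShortTimeFourierTransform

/-- if `f ∈ ℰ'(ℝ^d)` is a compactly supported (tempered) distribution and
`φ ∈ 𝒮(ℝ^d)`, then the short-time Fourier transform
`V_φ f(x,ξ) = f( y ↦ (2π)^{-d/2} e^{-i⟨y,ξ⟩} conj(φ(y−x)) )` satisfies, for some `N₀`
and all `N ≥ 0`, the bound `|V_φ f(x,ξ)| ≤ C_N ⟨x⟩^{-N} ⟨ξ⟩^{N₀}`. -/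
theorem stmt_15 {d : ℕ}
    (f : SchwartzMap (EuclideanSpace ℝ (Fin d)) ℂ →L[ℂ] ℂ)
    (K : Set (EuclideanSpace ℝ (Fin d))) (hK : IsCompact K)
    -- f has compact support contained in K:
    (hsupp : ∀ ψ : SchwartzMap (EuclideanSpace ℝ (Fin d)) ℂ,
      Disjoint (tsupport ⇑ψ) K → f ψ = 0)
    (φ : SchwartzMap (EuclideanSpace ℝ (Fin d)) ℂ)
    (V : EuclideanSpace ℝ (Fin d) → EuclideanSpace ℝ (Fin d) → ℂ)
    -- V is the short-time Fourier transform of f with window φ: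
    (hV : ∀ (x ξ : EuclideanSpace ℝ (Fin d))
      (ψ : SchwartzMap (EuclideanSpace ℝ (Fin d)) ℂ),
      (∀ y, ψ y = ((2 * π) ^ (-(d : ℝ) / 2) : ℝ) *
        Complex.exp (-Complex.I * (⟪y, ξ⟫ : ℝ)) * (starRingEnd ℂ) (φ (y - x))) →
      V x ξ = f ψ) :
    ∃ N₀ : ℝ, ∀ N : ℝ, 0 ≤ N → ∃ C : ℝ, 0 < C ∧
      ∀ x ξ : EuclideanSpace ℝ (Fin d),
        ‖V x ξ‖ ≤ C * jb x ^ (-N) * jb ξ ^ N₀ := by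
  set φbar := φ.postcompCLM (𝕜 := ℝ) Complex.conjCLE.toContinuousLinearMap
  obtain ⟨n, hn⟩ :=
    exists_one_add_norm_pow_mul_norm_map_timeFreqShift_le (f.restrictScalars ℝ) hK hsupp φbar
  refine ⟨n, fun N hN ↦ ?_⟩
  obtain ⟨C, hC, hbound⟩ := hn ⌈N⌉₊
  set c : ℝ := (2 * π) ^ (-(d : ℝ) / 2)
  have hc : 0 < c := by positivity
  refine ⟨c * (2 ^ n * C) + 1, by positivity, fun x ξ ↦ ?_⟩
  have hψ : ∀ y, ((c : ℂ) • timeFreqShift φbar x ξ) y =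
      c * Complex.exp (-Complex.I * (⟪y, ξ⟫ : ℝ)) * (starRingEnd ℂ) (φ (y - x)) := fun y ↦ by
    simp [timeFreqShift_apply, planeWave, φbar, mul_assoc]
  have hVx : ‖V x ξ‖ = c * ‖f (timeFreqShift φbar x ξ)‖ := by
    rw [hV x ξ _ hψ, map_smul, norm_smul, Complex.norm_real, Real.norm_of_nonneg hc.le]
  have hx := Real.rpow_nonneg (jb_pos x).le (-N)
  have hξ := Real.rpow_nonneg (jb_pos ξ).le (n : ℝ)
  calc ‖V x ξ‖ ≤ c * (2 ^ n * C * jb x ^ (-N) * jb ξ ^ (n : ℝ)) := by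
        rw [hVx]
        gcongr
        exact le_mul_jb_rpow_of_one_add_norm_pow_mul_le x hC hN (hbound x ξ)
    _ = c * (2 ^ n * C) * jb x ^ (-N) * jb ξ ^ (n : ℝ) := by ring
    _ ≤ (c * (2 ^ n * C) + 1) * jb x ^ (-N) * jb ξ ^ (n : ℝ) := by
        gcongr
        linarith
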